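/- arXiv:1904.06369 — 5 statements merged into one kernel-verified Lean document; each statement's English description precedes it below -/
import Mathlib

section
/- The formal power series identity Ψ(q)^2 = θ(q) · Ψ(q^2) holds, where Ψ(q) = Σ_{n≥0} q^{n(n+1)/2} and θ(q) = Σ_{n∈ℤ} q^{n^2}. -/
/-!
Comparing coefficients of `qᵐ`, the identity says that the pairs `(a, b) ∈ ℕ²` with
`T_a + T_b = m` are as many as the pairs `(x, n) ∈ ℤ × ℕ` with `x² + n(n + 1) = m`.
The substitution `a = n + x`, `b = n - x` gives `T_a + T_b = x² + n(n + 1)` identically, and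
since `T_{-c-1} = T_c`, folding a negative coordinate `c` to `-c - 1` makes it a bijection
`ℤ × ℕ → ℕ × ℕ`: the parity of `a + b` tells whether a coordinate was folded, and then the
larger one tells which.
-/

open PowerSeries Finset

section WeightGF

variable {α β : Type*}

def fiberProdEquiv (w : α → ℕ) (v : β → ℕ) (m : ℕ) :
    {p : α × β // w p.1 + v p.2 = m} ≃
      Σ ij : antidiagonal m, {a // w a = ij.1.1} × {b // v b = ij.1.2} where
  toFun p := ⟨⟨(w p.1.1, v p.1.2), mem_antidiagonal.2 p.2⟩, ⟨p.1.1, rfl⟩, ⟨p.1.2, rfl⟩⟩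
  invFun s := ⟨(s.2.1, s.2.2), by
    rw [s.2.1.2, s.2.2.2]; exact mem_antidiagonal.1 s.1.2⟩
  left_inv _ := rfl
  right_inv := by
    rintro ⟨⟨⟨i, j⟩, hij⟩, ⟨a, ha⟩, ⟨b, hb⟩⟩
    dsimp only at ha hb
    subst ha hb
    rfl

variable (R : Type*) [CommSemiring R]

noncomputable def weightGF (w : α → ℕ) : PowerSeries R :=
  PowerSeries.mk fun m => (Nat.card {a // w a = m} : R)

variable {R}

theorem weightGF_congr {w : α → ℕ} {v : β → ℕ} (e : α ≃ β) (h : ∀ a, v (e a) = w a) :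
    weightGF R w = weightGF R v := by
  ext m
  simp only [weightGF, coeff_mk]
  rw [Nat.card_congr (e.subtypeEquiv (q := fun b => v b = m) fun a => by rw [h])]

theorem weightGF_mul {w : α → ℕ} {v : β → ℕ} (hw : ∀ m, Finite {a // w a = m})
    (hv : ∀ m, Finite {b // v b = m}) :
    weightGF R w * weightGF R v = weightGF R fun p : α × β => w p.1 + v p.2 := by
  ext m
  simp only [weightGF, coeff_mul, coeff_mk]
  rw [Nat.card_congr (fiberProdEquiv w v m), Nat.card_sigma, Nat.cast_sum,
    ← sum_coe_sort (antidiagonal m)]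
  simp only [Nat.card_prod, Nat.cast_mul]

end WeightGF

theorem Nat.finite_fiber_of_le {w : ℕ → ℕ} (h : ∀ n, n ≤ w n) (m : ℕ) :
    Finite {n // w n = m} :=
  ((Set.finite_Iic m).subset fun n (hn : w n = m) => hn ▸ h n).to_subtype

theorem Int.finite_fiber_of_natAbs_le {w : ℤ → ℕ} (h : ∀ x, x.natAbs ≤ w x) (m : ℕ) :
    Finite {x // w x = m} :=
  ((Set.finite_Icc (-(m : ℤ)) m).subset fun x (hx : w x = m) => by
    have := hx ▸ h x
    simp only [Set.mem_Icc]
    omega).to_subtype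

theorem two_mul_triangle (n : ℕ) : 2 * (n * (n + 1) / 2) = n * (n + 1) :=
  Nat.two_mul_div_two_of_even (Nat.even_mul_succ_self n)

def foldNat (a : ℤ) : ℕ := if 0 ≤ a then a.toNat else (-a - 1).toNat

theorem foldNat_mul_succ (a : ℤ) : (foldNat a : ℤ) * (foldNat a + 1) = a * (a + 1) := by
  unfold foldNat
  split_ifs with ha
  · push_cast [Int.toNat_of_nonneg ha]; ring
  · push_cast [Int.toNat_of_nonneg (by omega : 0 ≤ -a - 1)]; ring

def triangularPairEquiv : ℤ × ℕ ≃ ℕ × ℕ where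
  toFun q := (foldNat (q.2 + q.1), foldNat (q.2 - q.1))
  invFun p :=
    if p.1 % 2 = p.2 % 2 then (((p.1 : ℤ) - p.2) / 2, (p.1 + p.2) / 2)
    else if p.2 < p.1 then (((p.1 : ℤ) + p.2 + 1) / 2, (p.1 - p.2 - 1) / 2)
    else (-(((p.1 : ℤ) + p.2 + 1) / 2), (p.2 - p.1 - 1) / 2)
  left_inv := by
    rintro ⟨x, n⟩
    simp only [foldNat]
    split_ifs <;> simp only [Prod.mk.injEq] <;> omega
  right_inv := by
    rintro ⟨a, b⟩
    dsimp only
    split_ifs <;> simp only [foldNat, Prod.mk.injEq] <;> split_ifs <;> omega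

theorem triangle_foldNat_add_sub (x : ℤ) (n : ℕ) :
    foldNat (n + x) * (foldNat (n + x) + 1) / 2 + foldNat (n - x) * (foldNat (n - x) + 1) / 2 =
      x.natAbs ^ 2 + n * (n + 1) := by
  apply Nat.eq_of_mul_eq_mul_left two_pos
  rw [mul_add, two_mul_triangle, two_mul_triangle]
  zify
  rw [foldNat_mul_succ, foldNat_mul_succ, sq_abs]
  ring

/-- `Ψ(q)² = θ(q) · Ψ(q²)` as formal power series over ℤ, where the coefficient of `qᵐ` in
`Ψ(q)` counts `n` with `Tₙ = m`, in `θ(q)` counts integers `x` with `x² = m`, and in `Ψ(q²)`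
counts `n` with `n(n+1) = m`. -/
theorem stmt2 :
    (PowerSeries.mk fun m => (Nat.card {n : ℕ // n * (n + 1) / 2 = m} : ℤ)) ^ 2 =
      (PowerSeries.mk fun m => (Nat.card {x : ℤ // x ^ 2 = (m : ℤ)} : ℤ)) *
      (PowerSeries.mk fun m => (Nat.card {n : ℕ // n * (n + 1) = m} : ℤ)) := by
  have hT := Nat.finite_fiber_of_le (w := fun n => n * (n + 1) / 2) fun n =>
    (Nat.le_div_iff_mul_le two_pos).2 (by rcases n with _ | n <;> nlinarith)
  have hU := Nat.finite_fiber_of_le (w := fun n => n * (n + 1)) fun n =>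
    Nat.le_mul_of_pos_right n n.succ_pos
  have hS := Int.finite_fiber_of_natAbs_le fun x => Nat.le_self_pow two_ne_zero x.natAbs
  have hθ : (PowerSeries.mk fun m => (Nat.card {x : ℤ // x ^ 2 = (m : ℤ)} : ℤ)) =
      weightGF ℤ fun x : ℤ => x.natAbs ^ 2 := by
    ext m
    simp only [weightGF, coeff_mk]
    rw [Nat.card_congr (Equiv.subtypeEquivRight fun x => by
      rw [← Int.natAbs_sq, ← Nat.cast_pow, Nat.cast_inj])]
  rw [hθ]
  change weightGF ℤ _ ^ 2 = _ * weightGF ℤ _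
  rw [sq, weightGF_mul hT hT, weightGF_mul hS hU]
  exact (weightGF_congr triangularPairEquiv fun q => triangle_foldNat_add_sub q.1 q.2).symm
end

section
/- For every positive integer n, δ_{2k}(n) = Σ_{a + 2b = n, a,b ≥ 0} r_k(a) · δ_k(b), where δ_k(m) counts representations of m as a sum of k triangular numbers and r_k(m) counts representations of m as a sum of k integer squares. -/
/-!
Group the `2k` triangular numbers in pairs. With `T z = z (z + 1) / 2`, the identities
`T (w + x) + T (w - x) = x² + 2 T w` and `T (|x| + w) + T (|x| - w - 1) = x² + 2 T w`
give a bijection `(u, v) ↦ (x, w)` from `ℕ × ℕ` onto `ℤ × ℕ` with `T u + T v = x² + 2 T w`: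
pairs with `u + v` even come from the first identity, pairs with `u + v` odd from the second,
the sign of `x` recording which of `u, v` is larger. Applied coordinatewise, it matches the
representations of `n` by `2k` triangular numbers with the pairs of a representation of `a` by
`k` squares and of `b` by `k` triangular numbers, `a + 2b = n`.
-/

open Finset

def tri (z : ℕ) : ℕ := z * (z + 1) / 2

lemma two_mul_tri (z : ℕ) : 2 * tri z = z * (z + 1) :=
  Nat.mul_div_cancel' (Nat.even_mul_succ_self z).two_dvd

lemma le_tri (z : ℕ) : z ≤ tri z := by
  have := two_mul_tri z
  nlinarith

lemma finite_setOf_tri_le (m : ℕ) : {z | tri z ≤ m}.Finite :=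
  (Set.finite_Iic m).subset fun z hz => (le_tri z).trans hz

lemma finite_setOf_natAbs_sq_le (m : ℕ) : {x : ℤ | x.natAbs ^ 2 ≤ m}.Finite :=
  (Set.finite_Icc (-(m : ℤ)) m).subset fun x (hx : x.natAbs ^ 2 ≤ m) => by
    have := Nat.le_self_pow two_ne_zero x.natAbs
    simp only [Set.mem_Icc]
    omega

abbrev Reps (ι : Type*) [Fintype ι] {α : Type*} (f : α → ℕ) (n : ℕ) :=
  {z : ι → α // n = ∑ i, f (z i)}

namespace Reps

variable {ι κ α β : Type*} [Fintype ι] [Fintype κ]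

lemma finite {f : α → ℕ} (hf : ∀ m, {a | f a ≤ m}.Finite) (n : ℕ) : Finite (Reps ι f n) := by
  refine ((Set.Finite.pi fun _ => hf n).subset fun z (hz : n = ∑ i, f (z i)) i _ => ?_).to_subtype
  exact hz ▸ single_le_sum (f := fun i => f (z i)) (fun _ _ => Nat.zero_le _) (mem_univ i)

lemma card_reindex (e : ι ≃ κ) (f : α → ℕ) (n : ℕ) :
    Nat.card (Reps κ f n) = Nat.card (Reps ι f n) :=
  Nat.card_congr <| (e.arrowCongr (Equiv.refl α)).symm.subtypeEquiv fun z => by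
    simp [← e.sum_comp]

lemma card_congr (e : α ≃ β) {f : α → ℕ} {g : β → ℕ} (h : ∀ a, f a = g (e a)) (n : ℕ) :
    Nat.card (Reps ι f n) = Nat.card (Reps ι g n) :=
  Nat.card_congr <| (Equiv.piCongrRight fun _ => e).subtypeEquiv fun z => by simp [h]

lemma card_sum_self (f : α → ℕ) (n : ℕ) :
    Nat.card (Reps (ι ⊕ ι) f n) = Nat.card (Reps ι (fun p : α × α => f p.1 + f p.2) n) :=
  Nat.card_congr <| ((Equiv.sumArrowEquivProdArrow ι ι α).trans
    (Equiv.arrowProdEquivProdArrow ι (fun _ => α) (fun _ => α)).symm).subtypeEquiv fun z => by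
      simp [Fintype.sum_sum_type, sum_add_distrib]

lemma card_prod_eq_sum {f : α → ℕ} {g : β → ℕ} (hf : ∀ m, {a | f a ≤ m}.Finite)
    (hg : ∀ m, {b | g b ≤ m}.Finite) (c n : ℕ) (S : Finset (ℕ × ℕ))
    (hS : ∀ q, q ∈ S ↔ q.1 + c * q.2 = n) :
    Nat.card (Reps ι (fun p : α × β => f p.1 + c * g p.2) n) =
      ∑ q ∈ S, Nat.card (Reps ι f q.1) * Nat.card (Reps ι g q.2) := by
  have := finite (ι := ι) hf
  have := finite (ι := ι) hg
  let Φ : (ι → α) × (ι → β) → ℕ × ℕ := fun p => (∑ i, f (p.1 i), ∑ i, g (p.2 i))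
  have e₁ : Reps ι (fun p : α × β => f p.1 + c * g p.2) n ≃ {p // Φ p ∈ S} :=
    (Equiv.arrowProdEquivProdArrow ι _ _).subtypeEquiv fun z => by
      simp [Φ, hS, sum_add_distrib, mul_sum, eq_comm]
  have e₂ (q : ℕ × ℕ) : {p // Φ p = q} ≃ Reps ι f q.1 × Reps ι g q.2 :=
    (Equiv.subtypeEquivRight fun p => by simp [Φ, Prod.ext_iff, eq_comm]).trans
      Equiv.subtypeProdEquivProd
  have e₃ : {p // Φ p ∈ S} ≃ Σ q : S, Reps ι f q.1.1 × Reps ι g q.1.2 :=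
    (Equiv.sigmaSubtypeFiberEquivSubtype Φ fun _ => Iff.rfl).symm.trans
      (Equiv.sigmaCongrRight fun q => e₂ q)
  rw [Nat.card_congr (e₁.trans e₃), Nat.card_sigma, ← sum_coe_sort S]
  exact sum_congr rfl fun q _ => Nat.card_prod _ _

lemma card_natAbs_sq (a : ℕ) :
    Nat.card (Reps ι (fun x : ℤ => x.natAbs ^ 2) a) =
      Nat.card {x : ι → ℤ // (a : ℤ) = ∑ i, x i ^ 2} :=
  Nat.card_congr <| Equiv.subtypeEquivRight fun x => by
    rw [← Nat.cast_inj (R := ℤ)]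
    push_cast
    simp only [sq_abs]

end Reps

def toSquareTri (q : ℕ × ℕ) : ℤ × ℕ :=
  if (q.1 + q.2) % 2 = 0 then (((q.1 : ℤ) - q.2) / 2, (q.1 + q.2) / 2)
  else if q.2 < q.1 then ((q.1 + q.2 + 1) / 2, (q.1 - q.2 - 1) / 2)
  else (-(((q.1 + q.2 + 1) / 2 : ℕ) : ℤ), (q.2 - q.1 - 1) / 2)

def ofSquareTri (q : ℤ × ℕ) : ℕ × ℕ :=
  if q.1.natAbs ≤ q.2 then ((q.2 + q.1).toNat, (q.2 - q.1).toNat)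
  else if 0 < q.1 then ((q.1 + q.2).toNat, (q.1 - q.2 - 1).toNat)
  else ((-q.1 - q.2 - 1).toNat, (q.2 - q.1).toNat)

def triPairEquiv : ℕ × ℕ ≃ ℤ × ℕ where
  toFun := toSquareTri
  invFun := ofSquareTri
  left_inv := fun ⟨u, v⟩ => by
    simp only [toSquareTri, ofSquareTri]
    split_ifs <;> simp only [Prod.mk.injEq] <;> omega
  right_inv := fun ⟨x, w⟩ => by
    simp only [toSquareTri, ofSquareTri]
    split_ifs <;> simp only [Prod.mk.injEq] <;> omega

lemma pronic_add_pronic_eq {x w u v : ℤ}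
    (h : u = w + x ∧ v = w - x ∨ u = x + w ∧ v = x - w - 1 ∨ u = -x - w - 1 ∧ v = w - x) :
    u * (u + 1) + v * (v + 1) = 2 * x ^ 2 + 2 * (w * (w + 1)) := by
  rcases h with ⟨rfl, rfl⟩ | ⟨rfl, rfl⟩ | ⟨rfl, rfl⟩ <;> ring

lemma tri_add_tri_ofSquareTri (q : ℤ × ℕ) :
    tri (ofSquareTri q).1 + tri (ofSquareTri q).2 = q.1.natAbs ^ 2 + 2 * tri q.2 := by
  have key := pronic_add_pronic_eq (x := q.1) (w := q.2) (u := (ofSquareTri q).1)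
    (v := (ofSquareTri q).2) (by simp only [ofSquareTri]; split_ifs <;> omega)
  have h₁ := two_mul_tri (ofSquareTri q).1
  have h₂ := two_mul_tri (ofSquareTri q).2
  have h₃ := two_mul_tri q.2
  zify at h₁ h₂ h₃ ⊢
  rw [sq_abs]
  linarith

theorem stmt3_general (k n : ℕ) :
    Nat.card {z : Fin (2 * k) → ℕ // n = ∑ i, z i * (z i + 1) / 2} =
      ∑ p ∈ (Finset.range (n + 1) ×ˢ Finset.range (n + 1)).filter
          (fun p => p.1 + 2 * p.2 = n),
        Nat.card {x : Fin k → ℤ // (p.1 : ℤ) = ∑ i, (x i) ^ 2} *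
        Nat.card {z : Fin k → ℕ // p.2 = ∑ i, z i * (z i + 1) / 2} := by
  have hS (p : ℕ × ℕ) : p ∈ (range (n + 1) ×ˢ range (n + 1)).filter
      (fun p => p.1 + 2 * p.2 = n) ↔ p.1 + 2 * p.2 = n := by
    simp only [mem_filter, mem_product, mem_range]
    omega
  calc Nat.card (Reps (Fin (2 * k)) tri n)
      = Nat.card (Reps (Fin k ⊕ Fin k) tri n) :=
        Reps.card_reindex (finSumFinEquiv.trans (finCongr (two_mul k).symm)) tri n
    _ = Nat.card (Reps (Fin k) (fun p : ℕ × ℕ => tri p.1 + tri p.2) n) :=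
        Reps.card_sum_self tri n
    _ = Nat.card (Reps (Fin k) (fun q : ℤ × ℕ => q.1.natAbs ^ 2 + 2 * tri q.2) n) :=
        (Reps.card_congr triPairEquiv.symm (fun q => (tri_add_tri_ofSquareTri q).symm) n).symm
    _ = _ := Reps.card_prod_eq_sum finite_setOf_natAbs_sq_le finite_setOf_tri_le 2 n _ hS
    _ = _ := sum_congr rfl fun p _ => by rw [Reps.card_natAbs_sq]; rfl

theorem stmt3 (k n : ℕ) (hn : 0 < n) :
    Nat.card {z : Fin (2 * k) → ℕ // n = ∑ i, z i * (z i + 1) / 2} =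
      ∑ p ∈ (Finset.range (n + 1) ×ˢ Finset.range (n + 1)).filter
          (fun p => p.1 + 2 * p.2 = n),
        Nat.card {x : Fin k → ℤ // (p.1 : ℤ) = ∑ i, (x i) ^ 2} *
        Nat.card {z : Fin k → ℕ // p.2 = ∑ i, z i * (z i + 1) / 2} :=
  stmt3_general k n
end

section
/- For any positive real R, the number of lattice points (z_1,...,z_k) ∈ ℤ^k satisfying Σ_{i=1}^k c_i (z_i - 1/2)^2 ≤ R^2 equals 2^k · Σ_{n=0}^{⌊R^2/2 - h/8⌋} δ_k(C;n), where h = c_1 + ... + c_k, provided R^2/2 ≥ h/8. -/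
/-!
Every integer is uniquely `w + 1` or `-w` with `w : ℕ`, and in both cases
`(z - 1/2)² = (w + 1/2)² = 2·(w(w+1)/2) + 1/4`. Hence the lattice points are counted by
`2^k` sign choices times the `w ∈ ℕ^k` with `2 ∑ cᵢ wᵢ(wᵢ+1)/2 + h/4 ≤ R²`, i.e. with
`∑ cᵢ wᵢ(wᵢ+1)/2 ≤ ⌊R²/2 - h/8⌋`; splitting those by the value `n` of the sum gives the `δ_k(C;n)`.
-/

open Finset

/-- Sends `w + 1 ↦ (w, false)` and `-w ↦ (w, true)`. -/
def intEquivNatBool : ℤ ≃ ℕ × Bool :=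
  ((Equiv.subRight 1).trans Equiv.intEquivNatSumNat).trans
    ((Equiv.boolProdEquivSum ℕ).symm.trans (Equiv.prodComm _ _))

lemma sub_half_sq_eq_intEquivNatBool (z : ℤ) :
    ((z : ℝ) - 1 / 2) ^ 2 = (((intEquivNatBool z).1 : ℝ) + 1 / 2) ^ 2 := by
  have key (p : ℕ × Bool) :
      (((intEquivNatBool.symm p : ℤ) : ℝ) - 1 / 2) ^ 2 = ((p.1 : ℝ) + 1 / 2) ^ 2 := by
    obtain ⟨w, _ | _⟩ := p <;> simp [intEquivNatBool, Equiv.intEquivNatSumNat] <;> ring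
  simpa using key (intEquivNatBool z)

lemma add_half_sq_eq_two_mul_triangle (w : ℕ) :
    ((w : ℝ) + 1 / 2) ^ 2 = 2 * ((w * (w + 1) / 2 : ℕ) : ℝ) + 1 / 4 := by
  rw [Nat.cast_div (Nat.even_mul_succ_self w).two_dvd (by norm_num)]
  push_cast
  ring

lemma le_mul_succ_div_two (w : ℕ) : w ≤ w * (w + 1) / 2 := by
  rw [Nat.le_div_iff_mul_le two_pos]
  rcases w with _ | w
  · rfl
  · nlinarith

theorem Nat.card_le_eq_sum_card_fiber {α : Type*} (f : α → ℕ) (N : ℕ)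
    (hfin : {a | f a ≤ N}.Finite) :
    Nat.card {a // f a ≤ N} = ∑ n ∈ range (N + 1), Nat.card {a // n = f a} := by
  induction N with
  | zero => simp [eq_comm]
  | succ N ih =>
    have hsplit : {a | f a ≤ N + 1} = {a | f a ≤ N} ∪ {a | N + 1 = f a} := by
      ext a; simp only [Set.mem_ofPred_eq, Set.mem_union]; omega
    have hfin_le : {a | f a ≤ N}.Finite := hfin.subset fun a (ha : f a ≤ N) => by
      show f a ≤ N + 1; omega
    have hfin_eq : {a | N + 1 = f a}.Finite := hfin.subset fun a (ha : N + 1 = f a) => by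
      show f a ≤ N + 1; omega
    have hdisj : Disjoint {a | f a ≤ N} {a | N + 1 = f a} :=
      Set.disjoint_left.mpr fun a (ha : f a ≤ N) (hb : N + 1 = f a) => by omega
    rw [sum_range_succ, ← ih hfin_le]
    change Nat.card ({a | f a ≤ N + 1} : Set α) =
      Nat.card ({a | f a ≤ N} : Set α) + Nat.card ({a | N + 1 = f a} : Set α)
    rw [Nat.card_coe_set_eq, Nat.card_coe_set_eq, Nat.card_coe_set_eq, hsplit,
      Set.ncard_union_eq hdisj hfin_le hfin_eq]

section

variable {ι : Type*} [Fintype ι]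

theorem card_subtype_intEquivNatBool_fst (Q : (ι → ℕ) → Prop) :
    Nat.card {z : ι → ℤ // Q fun i => (intEquivNatBool (z i)).1} =
      2 ^ Fintype.card ι * Nat.card {w // Q w} := by
  let e : (ι → ℤ) ≃ (ι → ℕ) × (ι → Bool) :=
    (Equiv.arrowCongr (Equiv.refl ι) intEquivNatBool).trans (Equiv.arrowProdEquivProdArrow _ _ _)
  calc _ = Nat.card ({w // Q w} × (ι → Bool)) :=
        Nat.card_congr ((e.subtypeEquiv (q := fun p => Q p.1) fun _ => Iff.rfl).trans
          Equiv.prodSubtypeFstEquivSubtypeProd)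
    _ = _ := by rw [Nat.card_prod, Nat.card_fun, mul_comm]; simp

theorem card_int_sub_half_sq_le (c : ι → ℝ) (B : ℝ) :
    Nat.card {z : ι → ℤ // ∑ i, c i * ((z i : ℝ) - 1 / 2) ^ 2 ≤ B} =
      2 ^ Fintype.card ι * Nat.card {w : ι → ℕ // ∑ i, c i * ((w i : ℝ) + 1 / 2) ^ 2 ≤ B} := by
  simp only [sub_half_sq_eq_intEquivNatBool]
  exact card_subtype_intEquivNatBool_fst fun w => ∑ i, c i * ((w i : ℝ) + 1 / 2) ^ 2 ≤ B

theorem sum_mul_add_half_sq (c w : ι → ℕ) :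
    ∑ i, (c i : ℝ) * ((w i : ℝ) + 1 / 2) ^ 2 =
      2 * ((∑ i, c i * (w i * (w i + 1) / 2) : ℕ) : ℝ) + ((∑ i, c i : ℕ) : ℝ) / 4 := by
  simp only [add_half_sq_eq_two_mul_triangle, Nat.cast_sum, Nat.cast_mul, mul_sum, sum_div,
    ← sum_add_distrib]
  exact sum_congr rfl fun i _ => by ring

theorem finite_setOf_sum_mul_triangle_le (c : ι → ℕ) (hc : ∀ i, 0 < c i) (N : ℕ) :
    {w : ι → ℕ | ∑ i, c i * (w i * (w i + 1) / 2) ≤ N}.Finite := by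
  classical
  refine (Set.finite_Iic fun _ => N).subset fun w hw i => ?_
  calc w i ≤ w i * (w i + 1) / 2 := le_mul_succ_div_two _
    _ ≤ c i * (w i * (w i + 1) / 2) := Nat.le_mul_of_pos_left _ (hc i)
    _ ≤ ∑ j, c j * (w j * (w j + 1) / 2) :=
        single_le_sum (f := fun j => c j * (w j * (w j + 1) / 2)) (fun _ _ => Nat.zero_le _)
          (mem_univ i)
    _ ≤ N := hw

end

theorem stmt7_general (k : ℕ) (c : Fin k → ℕ) (hc : ∀ i, 0 < c i) (R : ℝ)
    (h : ((∑ i, c i : ℕ) : ℝ) / 8 ≤ R ^ 2 / 2) :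
    Nat.card {z : Fin k → ℤ // ∑ i, (c i : ℝ) * ((z i : ℝ) - 1 / 2) ^ 2 ≤ R ^ 2} =
      2 ^ k * ∑ n ∈ Finset.range (⌊R ^ 2 / 2 - ((∑ i, c i : ℕ) : ℝ) / 8⌋₊ + 1),
        Nat.card {z : Fin k → ℕ // n = ∑ i, c i * (z i * (z i + 1) / 2)} := by
  set N := ⌊R ^ 2 / 2 - ((∑ i, c i : ℕ) : ℝ) / 8⌋₊
  have hcond (w : Fin k → ℕ) : (∑ i, (c i : ℝ) * ((w i : ℝ) + 1 / 2) ^ 2 ≤ R ^ 2) ↔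
      ∑ i, c i * (w i * (w i + 1) / 2) ≤ N := by
    rw [Nat.le_floor_iff (by linarith), sum_mul_add_half_sq]
    constructor <;> intro <;> linarith
  rw [card_int_sub_half_sq_le, Fintype.card_fin, Nat.card_congr (Equiv.subtypeEquivRight hcond),
    Nat.card_le_eq_sum_card_fiber _ _ (finite_setOf_sum_mul_triangle_le c hc N)]

theorem stmt7 (k : ℕ) (c : Fin k → ℕ) (hc : ∀ i, 0 < c i) (R : ℝ) (hR : 0 < R)
    (h : ((∑ i, c i : ℕ) : ℝ) / 8 ≤ R ^ 2 / 2) :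
    Nat.card {z : Fin k → ℤ // ∑ i, (c i : ℝ) * ((z i : ℝ) - 1 / 2) ^ 2 ≤ R ^ 2} =
      2 ^ k * ∑ n ∈ Finset.range (⌊R ^ 2 / 2 - ((∑ i, c i : ℕ) : ℝ) / 8⌋₊ + 1),
        Nat.card {z : Fin k → ℕ // n = ∑ i, c i * (z i * (z i + 1) / 2)} :=
  stmt7_general k c hc R h
end

section
/- For every positive integer n, the coefficient identity δ_4(n) = (1/4) · Σ_{a + 2b = n, a,b ≥ 0} r_2(a) · r_2(8b+2) holds, where δ_4 counts representations by four triangular numbers and r_2 counts representations as sums of two integer squares. -/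
/-!
Substituting `w = ±(2z + 1)` turns a representation of `n` by four triangular numbers, together
with a choice of four signs, into a representation of `8n + 4` as a sum of four odd squares.
Odd squares pair up through `(2x + y)² + (±(2x - y))² = 8x² + 2y²` with `y` odd: every pair of
odd integers `(s, t)` arises from exactly one `(x, y, ±)`, the sign being the one with
`4 ∣ s ± t`. Hence `16 δ₄(n) = 4 · #{(x, y) : 4(x₀² + x₁²) + y₀² + y₁² = 4n + 2, y odd}`, and
sorting these by `a = x₀² + x₁²` and `8b + 2 = y₀² + y₁²` (odd squares are `1 mod 8`) gives the sum.
-/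

open Finset

local notation "OddInt" => {m : ℤ // Odd m}

theorem Int.sq_emod_four_of_even {c : ℤ} (hc : Even c) : c ^ 2 % 4 = 0 := by
  obtain ⟨k, rfl⟩ := hc
  ring_nf
  omega

theorem Int.sq_emod_eight_of_odd {c : ℤ} (hc : Odd c) : c ^ 2 % 8 = 1 := by
  obtain ⟨k, rfl⟩ := hc
  obtain ⟨m, hm⟩ := Int.even_mul_succ_self k
  have : (2 * k + 1) ^ 2 = 8 * m + 1 := by linear_combination 4 * hm
  omega

theorem Int.odd_of_sq_add_sq_emod_four {a b : ℤ} (h : (a ^ 2 + b ^ 2) % 4 = 2) :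
    Odd a ∧ Odd b := by
  have hsq (c : ℤ) : c ^ 2 % 4 = 0 ∨ Odd c ∧ c ^ 2 % 4 = 1 := by
    rcases Int.even_or_odd c with hc | hc
    · exact .inl (Int.sq_emod_four_of_even hc)
    · exact .inr ⟨hc, Int.sq_mod_four_eq_one_of_odd hc⟩
  rcases hsq a with ha | ⟨ha, ha'⟩ <;> rcases hsq b with hb | ⟨hb, hb'⟩
  all_goals first | exact ⟨ha, hb⟩ | omega

theorem natCard_eq_sum_card_fiberwise {α β : Type*} [Finite α] {f : α → β} {s : Finset β}
    (hf : ∀ a, f a ∈ s) : Nat.card α = ∑ b ∈ s, Nat.card {a // f a = b} := by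
  let g : α → s := fun a ↦ ⟨f a, hf a⟩
  calc Nat.card α = Nat.card (Σ b : s, {a // g a = b}) :=
        Nat.card_congr (Equiv.sigmaFiberEquiv g).symm
    _ = ∑ b : s, Nat.card {a // g a = b} := Nat.card_sigma
    _ = ∑ b : s, Nat.card {a // f a = b} :=
        sum_congr rfl fun b _ ↦ Nat.card_congr (Equiv.subtypeEquivRight fun _ ↦ Subtype.ext_iff)
    _ = ∑ b ∈ s, Nat.card {a // f a = b} := sum_coe_sort s fun b ↦ Nat.card {a // f a = b}

theorem finite_sum_sq_le {ι : Type*} [Fintype ι] (m : ℤ) :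
    {x : ι → ℤ | ∑ i, x i ^ 2 ≤ m}.Finite := by
  refine (Set.Finite.pi fun _ ↦ Set.finite_Icc (-m) m).subset fun x hx i _ ↦ ?_
  have hi : x i ^ 2 ≤ m := (single_le_sum (fun j _ ↦ sq_nonneg (x j)) (mem_univ i)).trans hx
  have := Int.le_self_sq (x i)
  have := Int.le_self_sq (-x i)
  constructor <;> nlinarith

theorem card_pi_odd_subtype {ι : Type*} {P : (ι → ℤ) → Prop} (hP : ∀ y, P y → ∀ i, Odd (y i)) :
    Nat.card {y : ι → OddInt // P fun i ↦ y i} = Nat.card {y // P y} :=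
  Nat.card_congr
    { toFun y := ⟨fun i ↦ y.1 i, y.2⟩
      invFun y := ⟨fun i ↦ ⟨y.1 i, hP y.1 y.2 i⟩, y.2⟩ }

def oddEquiv : ℕ × Bool ≃ OddInt where
  toFun p := ⟨cond p.2 (2 * p.1 + 1) (-(2 * p.1 + 1)), by cases p.2 <;> simp [parity_simps]⟩
  invFun m := (m.1.natAbs / 2, decide (0 < m.1))
  left_inv := by
    rintro ⟨k, _ | _⟩ <;> refine Prod.ext ?_ ?_ <;>
      simp only [cond, decide_eq_true_eq, decide_eq_false_iff_not] <;> omega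
  right_inv := by
    rintro ⟨m, hm⟩
    rw [Int.odd_iff] at hm
    refine Subtype.ext ?_
    by_cases h : 0 < m <;> simp only [h, decide_true, decide_false, cond] <;> omega

theorem oddEquiv_sq (p : ℕ × Bool) :
    (oddEquiv p : ℤ) ^ 2 = 8 * (p.1 * (p.1 + 1) / 2 : ℕ) + 1 := by
  obtain ⟨k, b⟩ := p
  have h : ((k * (k + 1) / 2 : ℕ) : ℤ) * 2 = k * (k + 1) := by
    exact_mod_cast Nat.div_mul_cancel (Nat.even_mul_succ_self k).two_dvd
  cases b <;> simp only [oddEquiv, Equiv.coe_fn_mk, cond] <;> linear_combination (-4) * h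

theorem card_sum_odd_sq_eq {ι : Type*} [Fintype ι] (n : ℕ) :
    Nat.card {w : ι → OddInt // ∑ i, (w i : ℤ) ^ 2 = 8 * n + Fintype.card ι} =
      2 ^ Fintype.card ι * Nat.card {z : ι → ℕ // n = ∑ i, z i * (z i + 1) / 2} := by
  let e : (ι → ℕ) × (ι → Bool) ≃ (ι → OddInt) :=
    (Equiv.arrowProdEquivProdArrow _ _ _).symm.trans (Equiv.piCongrRight fun _ ↦ oddEquiv)
  have he : ∀ q, n = ∑ i, q.1 i * (q.1 i + 1) / 2 ↔
      ∑ i, (e q i : ℤ) ^ 2 = 8 * n + Fintype.card ι := fun q ↦ by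
    have hsq (i : ι) : (e q i : ℤ) ^ 2 = 8 * (q.1 i * (q.1 i + 1) / 2 : ℕ) + 1 :=
      oddEquiv_sq (q.1 i, q.2 i)
    simp only [hsq, sum_add_distrib, ← mul_sum, ← Nat.cast_sum, sum_const, card_univ,
      nsmul_eq_mul, mul_one]
    omega
  rw [← Nat.card_congr (e.subtypeEquiv he), Nat.card_congr (Equiv.prodSubtypeFstEquivSubtypeProd
      (p := fun z : ι → ℕ ↦ n = ∑ i, z i * (z i + 1) / 2)), Nat.card_prod, Nat.card_fun]
  simp [mul_comm]

def oddPairEquiv : (ℤ × OddInt) × Bool ≃ OddInt × OddInt where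
  toFun := fun ⟨⟨x, ⟨y, hy⟩⟩, b⟩ ↦
    (⟨2 * x + y, (even_two_mul x).add_odd hy⟩,
      cond b ⟨2 * x - y, (even_two_mul x).sub_odd hy⟩ ⟨y - 2 * x, hy.sub_even (even_two_mul x)⟩)
  invFun := fun ⟨⟨s, hs⟩, ⟨t, ht⟩⟩ ↦
    if h : 4 ∣ s + t then
      (((s + t) / 4, ⟨(s - t) / 2, by rw [Int.odd_iff] at *; omega⟩), true)
    else (((s - t) / 4, ⟨(s + t) / 2, by rw [Int.odd_iff] at *; omega⟩), false)
  left_inv := by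
    rintro ⟨⟨x, y, hy⟩, b⟩
    rw [Int.odd_iff] at hy
    cases b <;> dsimp only [cond] <;> split_ifs <;>
      simp only [Prod.mk.injEq, Subtype.mk.injEq, Bool.true_eq_false, Bool.false_eq_true,
        and_true, and_false] <;> omega
  right_inv := by
    rintro ⟨⟨s, hs⟩, ⟨t, ht⟩⟩
    rw [Int.odd_iff] at hs ht
    by_cases h : 4 ∣ s + t <;>
      simp only [h, dite_true, dite_false, cond, Prod.mk.injEq, Subtype.mk.injEq] <;> omega

theorem oddPairEquiv_sq (q : (ℤ × OddInt) × Bool) :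
    ((oddPairEquiv q).1 : ℤ) ^ 2 + ((oddPairEquiv q).2 : ℤ) ^ 2 =
      8 * q.1.1 ^ 2 + 2 * (q.1.2 : ℤ) ^ 2 := by
  obtain ⟨⟨x, y⟩, b⟩ := q
  cases b <;> simp only [oddPairEquiv, Equiv.coe_fn_mk, cond] <;> ring

def finFourEquivPairs (α : Type*) : (Fin 2 → α × α) ≃ (Fin 4 → α) where
  toFun p := ![(p 0).1, (p 0).2, (p 1).1, (p 1).2]
  invFun w := ![(w 0, w 1), (w 2, w 3)]
  left_inv p := by ext i <;> fin_cases i <;> rfl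
  right_inv w := by ext i; fin_cases i <;> rfl

theorem sum_finFourEquivPairs {α M : Type*} [AddCommMonoid M] (f : α → M) (p : Fin 2 → α × α) :
    ∑ k, f (finFourEquivPairs α p k) = ∑ i, (f (p i).1 + f (p i).2) := by
  simp [finFourEquivPairs, Fin.sum_univ_four, add_assoc]

theorem card_sum_odd_sq_fin_four (n : ℕ) :
    Nat.card {w : Fin 4 → OddInt // ∑ i, (w i : ℤ) ^ 2 = 8 * n + 4} =
      4 * Nat.card {q : (Fin 2 → ℤ) × (Fin 2 → OddInt) //
        4 * ∑ i, q.1 i ^ 2 + ∑ i, (q.2 i : ℤ) ^ 2 = 4 * n + 2} := by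
  let e : ((Fin 2 → ℤ) × (Fin 2 → OddInt)) × (Fin 2 → Bool) ≃ (Fin 4 → OddInt) :=
    ((Equiv.prodCongr (Equiv.arrowProdEquivProdArrow _ _ _).symm (Equiv.refl _)).trans
      (Equiv.arrowProdEquivProdArrow _ _ _).symm).trans
      ((Equiv.piCongrRight fun _ ↦ oddPairEquiv).trans (finFourEquivPairs _))
  have he : ∀ q, 4 * ∑ i, q.1.1 i ^ 2 + ∑ i, (q.1.2 i : ℤ) ^ 2 = 4 * n + 2 ↔
      ∑ i, (e q i : ℤ) ^ 2 = 8 * n + 4 := fun q ↦ by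
    have hsum : ∑ k, (e q k : ℤ) ^ 2 = 8 * ∑ i, q.1.1 i ^ 2 + 2 * ∑ i, (q.1.2 i : ℤ) ^ 2 :=
      calc ∑ k, (e q k : ℤ) ^ 2 = ∑ i, (8 * q.1.1 i ^ 2 + 2 * (q.1.2 i : ℤ) ^ 2) :=
            (sum_finFourEquivPairs (fun w : OddInt ↦ (w : ℤ) ^ 2) _).trans
              (sum_congr rfl fun i _ ↦ oddPairEquiv_sq ((q.1.1 i, q.1.2 i), q.2 i))
        _ = 8 * ∑ i, q.1.1 i ^ 2 + 2 * ∑ i, (q.1.2 i : ℤ) ^ 2 := by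
            rw [sum_add_distrib, mul_sum, mul_sum]
    omega
  rw [← Nat.card_congr (e.subtypeEquiv he), Nat.card_congr (Equiv.prodSubtypeFstEquivSubtypeProd
      (p := fun q : (Fin 2 → ℤ) × (Fin 2 → OddInt) ↦
        4 * ∑ i, q.1 i ^ 2 + ∑ i, (q.2 i : ℤ) ^ 2 = 4 * n + 2)), Nat.card_prod, Nat.card_fun]
  simp [mul_comm]

theorem finite_four_mul_sum_sq_add_sum_odd_sq {ι : Type*} [Fintype ι] (m : ℤ) :
    Finite {q : (ι → ℤ) × (ι → OddInt) // 4 * ∑ i, q.1 i ^ 2 + ∑ i, (q.2 i : ℤ) ^ 2 = m} := by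
  have hval : Function.Injective fun (y : ι → OddInt) i ↦ (y i : ℤ) :=
    Subtype.val_injective.comp_left
  refine Set.Finite.to_subtype (((finite_sum_sq_le m).prod
    ((finite_sum_sq_le m).preimage hval.injOn)).subset fun q hq ↦ ?_)
  have : 0 ≤ ∑ i, q.1 i ^ 2 := by positivity
  have : 0 ≤ ∑ i, (q.2 i : ℤ) ^ 2 := by positivity
  change _ = _ at hq
  constructor <;> simp only [Set.mem_preimage, Set.mem_ofPred_eq] <;> omega

def sumSqKey (q : (Fin 2 → ℤ) × (Fin 2 → OddInt)) : ℕ × ℕ :=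
  ((∑ i, q.1 i ^ 2).toNat, ((∑ i, (q.2 i : ℤ) ^ 2 - 2) / 8).toNat)

theorem sumSqKey_eq_iff {q : (Fin 2 → ℤ) × (Fin 2 → OddInt)} {p : ℕ × ℕ} :
    sumSqKey q = p ↔
      (p.1 : ℤ) = ∑ i, q.1 i ^ 2 ∧ ((8 * p.2 + 2 : ℕ) : ℤ) = ∑ i, (q.2 i : ℤ) ^ 2 := by
  have : 0 ≤ ∑ i, q.1 i ^ 2 := by positivity
  have : 0 ≤ ∑ i, (q.2 i : ℤ) ^ 2 := by positivity
  have h0 := Int.sq_emod_eight_of_odd (q.2 0).2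
  have h1 := Int.sq_emod_eight_of_odd (q.2 1).2
  have : (∑ i, (q.2 i : ℤ) ^ 2) % 8 = 2 := by rw [Fin.sum_univ_two]; omega
  simp only [sumSqKey, Prod.ext_iff]
  omega

theorem card_odd_sum_sq_fin_two {m : ℤ} (hm : m % 4 = 2) :
    Nat.card {y : Fin 2 → OddInt // m = ∑ i, (y i : ℤ) ^ 2} =
      Nat.card {y : Fin 2 → ℤ // m = ∑ i, y i ^ 2} :=
  card_pi_odd_subtype (P := fun y ↦ m = ∑ i, y i ^ 2) fun y hy ↦ Fin.forall_fin_two.mpr <|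
    Int.odd_of_sq_add_sq_emod_four (by rw [Fin.sum_univ_two] at hy; omega)

theorem card_four_mul_sum_sq_add_sum_odd_sq (n : ℕ) :
    Nat.card {q : (Fin 2 → ℤ) × (Fin 2 → OddInt) //
        4 * ∑ i, q.1 i ^ 2 + ∑ i, (q.2 i : ℤ) ^ 2 = 4 * n + 2} =
      ∑ p ∈ (range (n + 1) ×ˢ range (n + 1)).filter (fun p ↦ p.1 + 2 * p.2 = n),
        Nat.card {x : Fin 2 → ℤ // (p.1 : ℤ) = ∑ i, x i ^ 2} *
        Nat.card {y : Fin 2 → ℤ // ((8 * p.2 + 2 : ℕ) : ℤ) = ∑ i, y i ^ 2} := by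
  have := finite_four_mul_sum_sq_add_sum_odd_sq (ι := Fin 2) (4 * n + 2)
  refine (natCard_eq_sum_card_fiberwise (f := fun q ↦ sumSqKey q.1) fun q ↦ ?_).trans
    (sum_congr rfl fun p hp ↦ ?_)
  · obtain ⟨ha, hb⟩ := sumSqKey_eq_iff.mp (rfl : sumSqKey q.1 = _)
    have := q.2
    simp only [mem_filter, mem_product, mem_range]
    omega
  rw [mem_filter] at hp
  calc _ = Nat.card ({x : Fin 2 → ℤ // (p.1 : ℤ) = ∑ i, x i ^ 2} ×
          {y : Fin 2 → OddInt // ((8 * p.2 + 2 : ℕ) : ℤ) = ∑ i, (y i : ℤ) ^ 2}) :=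
        Nat.card_congr <| ((Equiv.subtypeSubtypeEquivSubtypeInter _ fun q ↦ sumSqKey q = p).trans
          (Equiv.subtypeEquivRight fun q ↦ by rw [sumSqKey_eq_iff]; omega)).trans
          (Equiv.subtypeProdEquivProd (p := fun x : Fin 2 → ℤ ↦ (p.1 : ℤ) = ∑ i, x i ^ 2)
            (q := fun y : Fin 2 → OddInt ↦ ((8 * p.2 + 2 : ℕ) : ℤ) = ∑ i, (y i : ℤ) ^ 2))
    _ = _ := by rw [Nat.card_prod, card_odd_sum_sq_fin_two (by omega)]

theorem stmt10_general (n : ℕ) :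
    4 * Nat.card {z : Fin 4 → ℕ // n = ∑ i, z i * (z i + 1) / 2} =
      ∑ p ∈ (Finset.range (n + 1) ×ˢ Finset.range (n + 1)).filter
          (fun p => p.1 + 2 * p.2 = n),
        Nat.card {x : Fin 2 → ℤ // (p.1 : ℤ) = ∑ i, (x i) ^ 2} *
        Nat.card {x : Fin 2 → ℤ // ((8 * p.2 + 2 : ℕ) : ℤ) = ∑ i, (x i) ^ 2} := by
  have h := card_sum_odd_sq_eq (ι := Fin 4) n
  rw [Fintype.card_fin, Nat.cast_ofNat, card_sum_odd_sq_fin_four,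
    card_four_mul_sum_sq_add_sum_odd_sq] at h
  omega

theorem stmt10 (n : ℕ) (hn : 0 < n) :
    4 * Nat.card {z : Fin 4 → ℕ // n = ∑ i, z i * (z i + 1) / 2} =
      ∑ p ∈ (Finset.range (n + 1) ×ˢ Finset.range (n + 1)).filter
          (fun p => p.1 + 2 * p.2 = n),
        Nat.card {x : Fin 2 → ℤ // (p.1 : ℤ) = ∑ i, (x i) ^ 2} *
        Nat.card {x : Fin 2 → ℤ // ((8 * p.2 + 2 : ℕ) : ℤ) = ∑ i, (x i) ^ 2} :=
  stmt10_general n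
end

section
/- For every positive integer n, with coefficient tuple C² = (c_1,...,c_k,c_1,...,c_k) and h = c_1+...+c_k: q_{2k}(C²; 8n+2h) = Σ_{a + 2b = n, a,b ≥ 0} r_k(C;a) · q_k(C; 8b+h). -/
open Finset

/-! Group the 2k odd variables of the doubled form into the pairs `(y i, z i)` sharing the
coefficient `c i`. Odd positive pairs `(y, z)` correspond bijectively to pairs `(x, w)` with
`x : ℤ` and `w` odd positive, via `y = |w + 2x|`, `z = |w - 2x|`, and `y² + z² = 2w² + 8x²`.
So `8n + 2h = Σ cᵢ(yᵢ² + zᵢ²)` becomes `8n + 2h = 2 Σ cᵢwᵢ² + 8 Σ cᵢxᵢ²`. As odd squares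
are `1 mod 8`, `Σ cᵢwᵢ² = 8b + h` for some `b`, and then `a = Σ cᵢxᵢ²` satisfies `a + 2b = n`. -/

namespace OddSquareReps

/- `y + z ≡ 2 (mod 4)` exactly when `w ± 2x` are both positive, and then `y + z = 2w`,
`y - z = 4x`; otherwise `|y - z| = 2w` and `y + z = 4|x|`. -/
def oddPairEquiv : {p : ℤ × ℕ // Odd p.2} ≃ {q : ℕ × ℕ // Odd q.1 ∧ Odd q.2} where
  toFun p := ⟨((p.1.2 + 2 * p.1.1).natAbs, (p.1.2 - 2 * p.1.1).natAbs), by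
    obtain ⟨⟨x, w⟩, hw⟩ := p
    simp only [Nat.odd_iff] at hw ⊢
    omega⟩
  invFun q :=
    ⟨if (q.1.1 + q.1.2) % 4 = 2 then (((q.1.1 : ℤ) - q.1.2) / 4, (q.1.1 + q.1.2) / 2)
     else
       (if q.1.2 < q.1.1 then (((q.1.1 + q.1.2) / 4 : ℕ) : ℤ) else -(((q.1.1 + q.1.2) / 4 : ℕ) : ℤ),
        ((q.1.1 : ℤ) - q.1.2).natAbs / 2), by
    obtain ⟨⟨y, z⟩, hy, hz⟩ := q
    simp only [Nat.odd_iff] at hy hz ⊢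
    split_ifs <;> omega⟩
  left_inv p := by
    obtain ⟨⟨x, w⟩, hw⟩ := p
    simp only [Nat.odd_iff] at hw
    apply Subtype.ext
    dsimp only
    split_ifs <;> refine Prod.ext ?_ ?_ <;> dsimp only <;> omega
  right_inv q := by
    obtain ⟨⟨y, z⟩, hy, hz⟩ := q
    simp only [Nat.odd_iff] at hy hz
    apply Subtype.ext
    dsimp only
    split_ifs <;> refine Prod.ext ?_ ?_ <;> dsimp only <;> omega

lemma oddPairEquiv_sq_add_sq (p : {p : ℤ × ℕ // Odd p.2}) :
    (oddPairEquiv p).1.1 ^ 2 + (oddPairEquiv p).1.2 ^ 2 = 2 * p.1.2 ^ 2 + 8 * p.1.1.natAbs ^ 2 := by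
  obtain ⟨⟨x, w⟩, hw⟩ := p
  show ((w : ℤ) + 2 * x).natAbs ^ 2 + ((w : ℤ) - 2 * x).natAbs ^ 2 = 2 * w ^ 2 + 8 * x.natAbs ^ 2
  zify
  simp only [sq_abs]
  ring

def sumArrowSubtypeEquiv {ι α : Type*} (P : α → Prop) :
    {y : ι ⊕ ι → α // ∀ j, P (y j)} ≃ (ι → {q : α × α // P q.1 ∧ P q.2}) where
  toFun y i := ⟨(y.1 (.inl i), y.1 (.inr i)), y.2 _, y.2 _⟩
  invFun f := ⟨Sum.elim (fun i => (f i).1.1) (fun i => (f i).1.2), by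
    rintro (i | i)
    exacts [(f i).2.1, (f i).2.2]⟩
  left_inv y := by ext (i | i) <;> rfl
  right_inv f := rfl

variable {ι : Type*} [Fintype ι] (c : ι → ℕ)

def doubledRepEquivOddPairRep (m : ℕ) :
    {y : ι ⊕ ι → ℕ // (∀ j, Odd (y j) ∧ 0 < y j) ∧ m = ∑ j, Sum.elim c c j * y j ^ 2} ≃
      {f : ι → {q : ℕ × ℕ // Odd q.1 ∧ Odd q.2} //
        m = ∑ i, c i * ((f i).1.1 ^ 2 + (f i).1.2 ^ 2)} :=
  (Equiv.subtypeEquivRight fun _ => by simp only [and_iff_left_of_imp Odd.pos]).trans <|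
    (Equiv.subtypeSubtypeEquivSubtypeInter (fun y : ι ⊕ ι → ℕ => ∀ j, Odd (y j))
      (fun y => m = ∑ j, Sum.elim c c j * y j ^ 2)).symm.trans <|
      Equiv.subtypeEquiv (sumArrowSubtypeEquiv Odd) fun y => by
        rw [Fintype.sum_sum_type]
        simp only [Sum.elim_inl, Sum.elim_inr, mul_add, sum_add_distrib]
        rfl

def mixedRepEquivOddPairRep (m : ℕ) :
    {g : ι → {p : ℤ × ℕ // Odd p.2} //
        m = ∑ i, c i * (2 * (g i).1.2 ^ 2 + 8 * (g i).1.1.natAbs ^ 2)} ≃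
      {f : ι → {q : ℕ × ℕ // Odd q.1 ∧ Odd q.2} //
        m = ∑ i, c i * ((f i).1.1 ^ 2 + (f i).1.2 ^ 2)} :=
  Equiv.subtypeEquiv (Equiv.piCongrRight fun _ => oddPairEquiv) fun g => by
    simp only [Equiv.piCongrRight_apply, Pi.map_apply, oddPairEquiv_sq_add_sq]

lemma exists_sum_mul_odd_sq_eq {w : ι → ℕ} (hw : ∀ i, Odd (w i)) :
    ∃ b, ∑ i, c i * w i ^ 2 = 8 * b + ∑ i, c i := by
  choose t ht using fun i => Nat.eight_dvd_sq_sub_one_of_odd (hw i)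
  refine ⟨∑ i, c i * t i, ?_⟩
  have hsq : ∀ i, w i ^ 2 = 8 * t i + 1 := fun i => by
    have := ht i
    have : 1 ≤ w i ^ 2 := Nat.one_le_pow _ _ (hw i).pos
    omega
  simp only [hsq, mul_sum, ← sum_add_distrib]
  exact sum_congr rfl fun i _ => by ring

lemma sum_mul_two_add_eight (u v : ι → ℕ) :
    ∑ i, c i * (2 * u i + 8 * v i) = 2 * ∑ i, c i * u i + 8 * ∑ i, c i * v i := by
  simp only [mul_add, sum_add_distrib, mul_sum]
  congr 1 <;> exact sum_congr rfl fun i _ => by ring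

lemma sum_mul_natAbs_sq_eq_iff (x : ι → ℤ) (a : ℕ) :
    ∑ i, c i * (x i).natAbs ^ 2 = a ↔ (a : ℤ) = ∑ i, (c i : ℤ) * x i ^ 2 := by
  rw [eq_comm (a := (a : ℤ)), ← Nat.cast_inj (R := ℤ)]
  push_cast [Int.natCast_natAbs, sq_abs]
  rfl

lemma split_of_sum_mul_two_add_eight_eq {n : ℕ} {x : ι → ℤ} {w : ι → ℕ} (hw : ∀ i, Odd (w i))
    (h : 8 * n + 2 * ∑ i, c i = ∑ i, c i * (2 * w i ^ 2 + 8 * (x i).natAbs ^ 2)) :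
    ∑ i, c i * (x i).natAbs ^ 2 + 2 * ((∑ i, c i * w i ^ 2 - ∑ i, c i) / 8) = n ∧
      8 * ((∑ i, c i * w i ^ 2 - ∑ i, c i) / 8) + ∑ i, c i = ∑ i, c i * w i ^ 2 := by
  obtain ⟨b, hb⟩ := exists_sum_mul_odd_sq_eq c hw
  have := sum_mul_two_add_eight c (fun i => w i ^ 2) (fun i => (x i).natAbs ^ 2)
  omega

def mixedRepEquivSigma (n : ℕ) (s : Finset (ℕ × ℕ)) (hs : ∀ p, p ∈ s ↔ p.1 + 2 * p.2 = n) :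
    {g : ι → {p : ℤ × ℕ // Odd p.2} //
        8 * n + 2 * ∑ i, c i = ∑ i, c i * (2 * (g i).1.2 ^ 2 + 8 * (g i).1.1.natAbs ^ 2)} ≃
      Σ p : s, {x : ι → ℤ // (p.1.1 : ℤ) = ∑ i, (c i : ℤ) * x i ^ 2} ×
        {y : ι → ℕ // (∀ i, Odd (y i) ∧ 0 < y i) ∧ 8 * p.1.2 + ∑ i, c i = ∑ i, c i * y i ^ 2} where
  toFun g :=
    have h := split_of_sum_mul_two_add_eight_eq c (fun i => (g.1 i).2) g.2
    ⟨⟨(∑ i, c i * (g.1 i).1.1.natAbs ^ 2, (∑ i, c i * (g.1 i).1.2 ^ 2 - ∑ i, c i) / 8),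
        (hs _).2 h.1⟩,
      ⟨fun i => (g.1 i).1.1, (sum_mul_natAbs_sq_eq_iff c _ _).1 rfl⟩,
      ⟨fun i => (g.1 i).1.2, fun i => ⟨(g.1 i).2, (g.1 i).2.pos⟩, h.2⟩⟩
  invFun t := ⟨fun i => ⟨(t.2.1.1 i, t.2.2.1 i), (t.2.2.2.1 i).1⟩, by
    obtain ⟨⟨⟨a, b⟩, hab⟩, ⟨x, hx⟩, ⟨y, -, hy⟩⟩ := t
    have ha := (sum_mul_natAbs_sq_eq_iff c x a).2 hx
    have := (hs _).1 hab
    have := sum_mul_two_add_eight c (fun i => y i ^ 2) (fun i => (x i).natAbs ^ 2)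
    have hy : 8 * b + ∑ i, c i = ∑ i, c i * y i ^ 2 := hy
    show 8 * n + 2 * ∑ i, c i = ∑ i, c i * (2 * y i ^ 2 + 8 * (x i).natAbs ^ 2)
    omega⟩
  left_inv g := rfl
  right_inv t := by
    obtain ⟨⟨⟨a, b⟩, hab⟩, ⟨x, hx⟩, ⟨y, -, hy⟩⟩ := t
    have ha := (sum_mul_natAbs_sq_eq_iff c x a).2 hx
    have hb : (∑ i, c i * y i ^ 2 - ∑ i, c i) / 8 = b := by
      have hy : 8 * b + ∑ i, c i = ∑ i, c i * y i ^ 2 := hy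
      omega
    subst ha hb
    rfl

lemma finite_sum_mul_sq_eq {c : ι → ℕ} (hc : ∀ i, 0 < c i) (a : ℕ) :
    Finite {x : ι → ℤ // (a : ℤ) = ∑ i, (c i : ℤ) * x i ^ 2} := by
  refine Set.Finite.to_subtype <| (Set.Finite.pi fun _ => Set.finite_Icc (-(a : ℤ)) a).subset
    fun x hx i _ => abs_le.mp ?_
  have hterm : (c i : ℤ) * x i ^ 2 ≤ a := hx ▸ single_le_sum (f := fun j => (c j : ℤ) * x j ^ 2)
    (fun j _ => by positivity) (mem_univ i)
  have hci : (1 : ℤ) ≤ c i := by exact_mod_cast hc i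
  rw [Int.abs_eq_natAbs]
  nlinarith [Int.natAbs_le_self_sq (x i), sq_nonneg (x i)]

lemma finite_odd_sum_mul_sq_eq {c : ι → ℕ} (hc : ∀ i, 0 < c i) (m : ℕ) :
    Finite {y : ι → ℕ // (∀ i, Odd (y i) ∧ 0 < y i) ∧ m = ∑ i, c i * y i ^ 2} :=
  have := finite_sum_mul_sq_eq hc m
  Finite.of_injective (β := {x : ι → ℤ // (m : ℤ) = ∑ i, (c i : ℤ) * x i ^ 2})
    (fun y => ⟨fun i => y.1 i, by beta_reduce; exact_mod_cast y.2.2⟩) fun y y' h =>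
      Subtype.ext <| funext fun i => by simpa using congrFun (congrArg Subtype.val h) i

end OddSquareReps

open OddSquareReps in
theorem stmt19_general (k : ℕ) (c : Fin k → ℕ) (hc : ∀ i, 0 < c i) (n : ℕ) :
    Nat.card {y : Fin k ⊕ Fin k → ℕ // (∀ i, Odd (y i) ∧ 0 < y i) ∧
        8 * n + 2 * ∑ i, c i = ∑ i, Sum.elim c c i * (y i) ^ 2} =
      ∑ p ∈ (Finset.range (n + 1) ×ˢ Finset.range (n + 1)).filter
          (fun p => p.1 + 2 * p.2 = n),
        Nat.card {x : Fin k → ℤ // (p.1 : ℤ) = ∑ i, (c i : ℤ) * (x i) ^ 2} *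
        Nat.card {y : Fin k → ℕ // (∀ i, Odd (y i) ∧ 0 < y i) ∧
          8 * p.2 + ∑ i, c i = ∑ i, c i * (y i) ^ 2} := by
  set s := (Finset.range (n + 1) ×ˢ Finset.range (n + 1)).filter (fun p => p.1 + 2 * p.2 = n)
  have hs : ∀ p, p ∈ s ↔ p.1 + 2 * p.2 = n := fun p => by
    simp only [s, mem_filter, mem_product, mem_range]
    omega
  have := finite_sum_mul_sq_eq hc
  have := finite_odd_sum_mul_sq_eq hc
  rw [Nat.card_congr <| (doubledRepEquivOddPairRep c _).trans <|
      (mixedRepEquivOddPairRep c _).symm.trans (mixedRepEquivSigma c n s hs),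
    Nat.card_sigma, ← sum_coe_sort s]
  simp only [Nat.card_prod]

theorem stmt19 (k : ℕ) (c : Fin k → ℕ) (hc : ∀ i, 0 < c i) (n : ℕ) (hn : 0 < n) :
    Nat.card {y : Fin k ⊕ Fin k → ℕ // (∀ i, Odd (y i) ∧ 0 < y i) ∧
        8 * n + 2 * ∑ i, c i = ∑ i, Sum.elim c c i * (y i) ^ 2} =
      ∑ p ∈ (Finset.range (n + 1) ×ˢ Finset.range (n + 1)).filter
          (fun p => p.1 + 2 * p.2 = n),
        Nat.card {x : Fin k → ℤ // (p.1 : ℤ) = ∑ i, (c i : ℤ) * (x i) ^ 2} *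
        Nat.card {y : Fin k → ℕ // (∀ i, Odd (y i) ∧ 0 < y i) ∧
          8 * p.2 + ∑ i, c i = ∑ i, c i * (y i) ^ 2} :=
  stmt19_general k c hc n
end
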